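/- arXiv:2308.12078 — 2 statements merged into one kernel-verified Lean document; each statement's English description precedes it below -/
import Mathlib

section
/- Let φ = [[1,0,0,0],[0,0,0,−1],[0,0,1,0],[0,−1,0,0]], J_c = [[0,−1,0,0],[1,0,0,0],[0,0,0,−1],[0,0,1,0]], and J_s = [[0,0,0,1],[0,0,−1,0],[0,1,0,0],[−1,0,0,0]] be 4×4 real matrices. Then φ · J_c · φ⁻¹ = J_s. -/
open Matrix


private lemma one_fin_four' : (1 : Matrix (Fin 4) (Fin 4) ℝ) =
    !![1, 0, 0, 0; 0, 1, 0, 0; 0, 0, 1, 0; 0, 0, 0, 1] := by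
  ext i j
  fin_cases i <;> fin_cases j <;> simp [Matrix.one_apply] <;> rfl

/-- Conjugation by the Cavalcanti–Gualtieri T-duality matrix `φ` takes the
generalized complex structure of complex type `J_c` to the one of symplectic type `J_s`. -/
theorem conjugation_complex_to_symplectic :
    let φ : Matrix (Fin 4) (Fin 4) ℝ :=
      !![1, 0, 0, 0; 0, 0, 0, -1; 0, 0, 1, 0; 0, -1, 0, 0]
    let Jc : Matrix (Fin 4) (Fin 4) ℝ :=
      !![0, -1, 0, 0; 1, 0, 0, 0; 0, 0, 0, -1; 0, 0, 1, 0]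
    let Js : Matrix (Fin 4) (Fin 4) ℝ :=
      !![0, 0, 0, 1; 0, 0, -1, 0; 0, 1, 0, 0; -1, 0, 0, 0]
    φ * Jc * φ⁻¹ = Js := by
  intro φ Jc Js
  have hinv : φ⁻¹ = φ := by
    apply Matrix.inv_eq_left_inv
    show φ * φ = 1
    rw [one_fin_four']
    ext i j
    fin_cases i <;> fin_cases j <;>
      simp [φ, Matrix.mul_apply, Fin.sum_univ_four, Matrix.vecHead, Matrix.vecTail]
  rw [hinv]
  ext i j
  fin_cases i <;> fin_cases j <;>
    simp [φ, Jc, Js, Matrix.mul_apply, Fin.sum_univ_four, Matrix.vecHead, Matrix.vecTail, Function.comp]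
end

section
/- Let a, x, y ∈ ℝ and let φ = [[1,0,0,0],[0,0,0,−1],[0,0,1,0],[0,−1,0,0]] and J_n = [[a,0,0,−x],[0,a,x,0],[0,−y,−a,0],[y,0,0,−a]] be 4×4 real matrices. Then φ · J_n · φ⁻¹ = [[a,x,0,0],[−y,−a,0,0],[0,0,−a,y],[0,0,−x,a]]. -/
open Matrix

/-- Conjugation by the Cavalcanti–Gualtieri T-duality matrix `φ` takes the
generalized complex structure of noncomplex type `J_n` (with parameters `a`, `x`, `y`) to the
block matrix of complex type. -/
theorem conjugation_noncomplex_type (a x y : ℝ) :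
    let φ : Matrix (Fin 4) (Fin 4) ℝ :=
      !![1, 0, 0, 0; 0, 0, 0, -1; 0, 0, 1, 0; 0, -1, 0, 0]
    let Jn : Matrix (Fin 4) (Fin 4) ℝ :=
      !![a, 0, 0, -x; 0, a, x, 0; 0, -y, -a, 0; y, 0, 0, -a]
    φ * Jn * φ⁻¹ =
      !![a, x, 0, 0; -y, -a, 0, 0; 0, 0, -a, y; 0, 0, -x, a] := by
  intro φ Jn
  have hφ : φ * φ = 1 := by
    ext i j
    fin_cases i <;> fin_cases j <;>
      simp [φ, Matrix.mul_apply, Fin.sum_univ_four, Matrix.one_apply, Matrix.vecHead, Matrix.vecTail]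
  rw [Matrix.inv_eq_right_inv hφ]
  ext i j
  fin_cases i <;> fin_cases j <;>
    simp [φ, Jn, Matrix.mul_apply, Fin.sum_univ_four, Matrix.vecHead, Matrix.vecTail]
end
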